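/- For every real number ε > 0, the function g_ε(t) = t + i·ε·t^2 on [0,1] belongs to W_1: every isometry S : ℂ → ℂ with S(g_ε([0,1])) = g_ε([0,1]) is the identity map. -/

import Mathlib

/-- `f ∈ C([0,1])` is continuously differentiable on `[0,1]`. -/
def IsC1 (f : C(unitInterval, ℂ)) : Prop :=
  ∃ g : ℝ → ℂ, ContDiffOn ℝ 1 g (Set.Icc 0 1) ∧ ∀ t : unitInterval, f t = g t

/-- The set `W₁` of members `f` of `A₁` such that the only surjective isometry of `ℂ` leaving
the range of `f` invariant is the identity. -/
def Wset (A1 : Submodule ℂ C(unitInterval, ℂ)) : Set C(unitInterval, ℂ) :=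
  {f | f ∈ A1 ∧ ∀ S : ℂ → ℂ, Isometry S → Function.Surjective S →
    S '' Set.range ⇑f = Set.range ⇑f → S = id}

/-- The function `g_ε(t) = t + i·ε·t²` on `[0,1]`. -/
noncomputable def gEx (ε : ℝ) : C(unitInterval, ℂ) :=
  ⟨fun t => ((t : ℝ) : ℂ) + Complex.I * (ε : ℂ) * ((t : ℝ) : ℂ) ^ 2, by fun_prop⟩

/-! The range of `g_ε` is the arc `y = εx²`, `0 ≤ x ≤ 1`, of a parabola. Its diameter is
attained only by the pair of endpoints `0` and `1 + iε`, so an isometry `S` preserving the arc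
fixes or swaps them. Writing `S z = S 0 + a z` or `S z = S 0 + a z̄`, this determines `a` in
each of the four cases, and only the identity keeps `g_ε(1/2) = 1/2 + iε/4` on the parabola. -/

open Set Complex ComplexConjugate

lemma exists_eq_add_mul_or_eq_add_mul_conj {S : ℂ → ℂ} (hS : Isometry S)
    (hsurj : Function.Surjective S) :
    ∃ a : ℂ, (∀ z, S z = S 0 + a * z) ∨ (∀ z, S z = S 0 + a * conj z) := by
  let e : ℂ ≃ᵢ ℂ := ⟨Equiv.ofBijective S ⟨hS.injective, hsurj⟩, hS⟩
  have he (z : ℂ) : e.toRealLinearIsometryEquiv z = S z - S 0 :=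
    e.toRealLinearIsometryEquiv_apply z
  obtain ⟨a, h | h⟩ := linear_isometry_complex e.toRealLinearIsometryEquiv
  · refine ⟨a, Or.inl fun z => ?_⟩
    have := he z
    rw [h, rotation_apply] at this
    linear_combination -this
  · refine ⟨a, Or.inr fun z => ?_⟩
    have := he z
    rw [h, LinearIsometryEquiv.trans_apply, rotation_apply, conjLIE_apply] at this
    linear_combination -this

lemma isC1_gEx (ε : ℝ) : IsC1 (gEx ε) :=
  have hofReal : ContDiff ℝ 1 ((↑) : ℝ → ℂ) := ofRealCLM.contDiff
  ⟨fun t : ℝ => (t : ℂ) + I * ε * (t : ℂ) ^ 2,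
    (hofReal.add (contDiff_const.mul (hofReal.pow 2))).contDiffOn, fun _ => rfl⟩

lemma mem_range_gEx {ε : ℝ} {z : ℂ} :
    z ∈ range (gEx ε) ↔ z.re ∈ Icc 0 1 ∧ z.im = ε * z.re ^ 2 := by
  constructor
  · rintro ⟨t, rfl⟩
    simp [gEx, ← ofReal_pow]
  · rintro ⟨ht, him⟩
    refine ⟨⟨z.re, ht⟩, Complex.ext ?_ ?_⟩ <;> simp [gEx, ← ofReal_pow, him]

lemma one_add_I_mul_ne_zero (ε : ℝ) : (1 + I * ε : ℂ) ≠ 0 :=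
  fun h => by simpa using congrArg re h

lemma eq_of_mem_range_gEx_of_dist_eq {ε : ℝ} {z w : ℂ} (hz : z ∈ range (gEx ε))
    (hw : w ∈ range (gEx ε)) (hzw : dist z w = dist 0 (1 + I * ε)) :
    (z = 0 ∧ w = 1 + I * ε) ∨ (z = 1 + I * ε ∧ w = 0) := by
  obtain ⟨⟨hx0, hx1⟩, hzim⟩ := mem_range_gEx.1 hz
  obtain ⟨⟨hy0, hy1⟩, hwim⟩ := mem_range_gEx.1 hw
  set x := z.re
  set y := w.re
  have hsq : (x - y) ^ 2 + ε ^ 2 * (x ^ 2 - y ^ 2) ^ 2 = 1 + ε ^ 2 := by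
    have := congrArg (· ^ 2) hzw
    simp only [dist_eq, ← normSq_eq_norm_sq, normSq_apply, sub_re, sub_im, hzim, hwim] at this
    simp at this
    linear_combination this
  have hx2 : x ^ 2 ≤ 1 := pow_le_one₀ hx0 hx1
  have hy2 : y ^ 2 ≤ 1 := pow_le_one₀ hy0 hy1
  have hd : (x - y) ^ 2 ≤ 1 :=
    (sq_le_one_iff_abs_le_one _).2 (abs_le.2 ⟨by linarith, by linarith⟩)
  have hd2 : (x ^ 2 - y ^ 2) ^ 2 ≤ 1 := (sq_le_one_iff_abs_le_one _).2 <|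
    abs_le.2 ⟨by linarith [sq_nonneg x], by linarith [sq_nonneg y]⟩
  have hd1 : (x - y) ^ 2 = 1 := by nlinarith [mul_le_mul_of_nonneg_left hd2 (sq_nonneg ε)]
  have hxy : (x - y - 1) * (x - y + 1) = 0 := by linear_combination hd1
  rcases mul_eq_zero.1 hxy with h | h
  · obtain ⟨hx, hy⟩ : x = 1 ∧ y = 0 := ⟨by linarith, by linarith⟩
    right
    constructor <;> apply Complex.ext <;> simp [hzim, hwim, hx, hy, x, y]
  · obtain ⟨hx, hy⟩ : x = 0 ∧ y = 1 := ⟨by linarith, by linarith⟩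
    left
    constructor <;> apply Complex.ext <;> simp [hzim, hwim, hx, hy, x, y]

lemma fix_or_swap_endpoints_of_mapsTo_range_gEx {ε : ℝ} {S : ℂ → ℂ} (hS : Isometry S)
    (hK : MapsTo S (range (gEx ε)) (range (gEx ε))) :
    (S 0 = 0 ∧ S (1 + I * ε) = 1 + I * ε) ∨ (S 0 = 1 + I * ε ∧ S (1 + I * ε) = 0) :=
  eq_of_mem_range_gEx_of_dist_eq (hK (mem_range_gEx.2 (by simp)))
    (hK (mem_range_gEx.2 (by simp))) (hS.dist_eq _ _)

lemma mul_conj_notMem_range_gEx {ε : ℝ} (hε : ε ≠ 0) {a : ℂ}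
    (ha : a * conj (1 + I * ε) = 1 + I * ε) :
    a * conj (1 / 2 + I * ε / 4) ∉ range (gEx ε) := by
  set w := a * conj (1 / 2 + I * ε / 4)
  have hwre : w.re = a.re / 2 + a.im * ε / 4 := by
    simp [w, map_div₀, Complex.conj_ofNat]; ring
  have hwim : w.im = a.im / 2 - a.re * ε / 4 := by
    simp [w, map_div₀, Complex.conj_ofNat]; ring
  have hare : a.re + a.im * ε = 1 := by simpa using congrArg re ha
  have haim : a.im - a.re * ε = ε := by simpa [neg_add_eq_sub] using congrArg im ha
  intro hw
  obtain ⟨⟨h0, h1⟩, him⟩ := mem_range_gEx.1 hw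
  have : w.re ^ 2 - w.re = 1 / 4 := mul_left_cancel₀ hε <| by
    linear_combination -him + hwim - ε * hwre - ε / 4 * hare + 1 / 2 * haim
  nlinarith [mul_nonneg h0 (sub_nonneg.2 h1)]

lemma add_mul_notMem_range_gEx {ε : ℝ} (hε : ε ≠ 0) {a : ℂ}
    (ha : 1 + I * ε + a * (1 + I * ε) = 0) :
    1 + I * ε + a * (1 / 2 + I * ε / 4) ∉ range (gEx ε) := by
  obtain rfl : a = -1 := by
    have : (1 + a) * (1 + I * ε) = 0 := by linear_combination ha
    linear_combination (mul_eq_zero.1 this).resolve_right (one_add_I_mul_ne_zero ε)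
  intro hw
  have him := (mem_range_gEx.1 hw).2
  simp at him
  exact hε (by linarith)

lemma add_mul_conj_notMem_range_gEx {ε : ℝ} (hε : ε ≠ 0) {a : ℂ}
    (ha : 1 + I * ε + a * conj (1 + I * ε) = 0) :
    1 + I * ε + a * conj (1 / 2 + I * ε / 4) ∉ range (gEx ε) := by
  set w := 1 + I * ε + a * conj (1 / 2 + I * ε / 4)
  have hwre : w.re = 1 + a.re / 2 + a.im * ε / 4 := by
    simp [w, map_div₀, Complex.conj_ofNat]; ring
  have hwim : w.im = ε + a.im / 2 - a.re * ε / 4 := by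
    simp [w, map_div₀, Complex.conj_ofNat]; ring
  have hare : 1 + a.re + a.im * ε = 0 := by
    have := congrArg re ha
    simp at this
    linear_combination this
  have haim : ε + a.im - a.re * ε = 0 := by
    have := congrArg im ha
    simp at this
    linear_combination this
  have hwre' : w.re * (1 + ε ^ 2) = 1 / 2 + ε ^ 2 := by
    linear_combination (1 + ε ^ 2) * hwre + (1 / 2 + ε ^ 2 / 4) * hare - ε / 4 * haim
  have hwim' : w.im * (1 + ε ^ 2) = ε / 4 + 3 * ε ^ 3 / 4 := by
    linear_combination (1 + ε ^ 2) * hwim + ε / 4 * hare + (1 / 2 + ε ^ 2 / 4) * haim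
  intro hw
  obtain ⟨-, him⟩ := mem_range_gEx.1 hw
  have : ε ^ 5 = 0 := by
    linear_combination 4 * (-(1 + ε ^ 2) ^ 2 * him + (1 + ε ^ 2) * hwim'
      - ε * (w.re * (1 + ε ^ 2) + 1 / 2 + ε ^ 2) * hwre')
  exact hε (pow_eq_zero_iff (by norm_num) |>.1 this)

/-- for every `ε > 0` the function `g_ε(t) = t + i·ε·t²` belongs to `W₁`. -/
theorem stmt_5 (A1 : Submodule ℂ C(unitInterval, ℂ))
    (hC1 : ∀ f : C(unitInterval, ℂ), IsC1 f → f ∈ A1) :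
    ∀ ε : ℝ, 0 < ε → gEx ε ∈ Wset A1 := by
  intro ε hε
  refine ⟨hC1 _ (isC1_gEx ε), fun S hS hsurj hSK => ?_⟩
  have hK : MapsTo S (range (gEx ε)) (range (gEx ε)) := mapsTo_iff_image_subset.2 hSK.subset
  have hq : S (1 / 2 + I * ε / 4) ∈ range (gEx ε) :=
    hK (mem_range_gEx.2 ⟨by norm_num, by simp [div_ofNat_im]; ring⟩)
  obtain ⟨a, hS' | hS'⟩ := exists_eq_add_mul_or_eq_add_mul_conj hS hsurj <;>
    rcases fix_or_swap_endpoints_of_mapsTo_range_gEx hS hK with ⟨h0, hp⟩ | ⟨h0, hp⟩ <;>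
    rw [hS', h0] at hp hq
  · rw [zero_add, mul_eq_right₀ (one_add_I_mul_ne_zero ε)] at hp
    funext z
    rw [hS', h0, hp, zero_add, one_mul, id]
  · exact absurd hq (add_mul_notMem_range_gEx hε.ne' hp)
  · rw [zero_add] at hp hq
    exact absurd hq (mul_conj_notMem_range_gEx hε.ne' hp)
  · exact absurd hq (add_mul_conj_notMem_range_gEx hε.ne' hp)
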